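/- Let σ(z) and τ(z) be polynomials with deg σ ≤ 2 and deg τ ≤ 1, and let a_1,…,a_M be pairwise distinct complex numbers satisfying the stationary system τ(a_k) + 2σ(a_k)·∑_{j≠k} 1/(a_k − a_j) = 0 for all k. Then the monic polynomial p(z) = ∏_{j=1}^{M}(z − a_j) satisfies the hypergeometric-type equation σ(z)p'' + τ(z)p' + λ_M p = 0 with λ_M = −(M(M−1)/2)·σ'' − M·τ'. -/

import Mathlib

/-!
Let `q = σ p'' + τ p' + λ_M p`. As `deg σ ≤ 2` and `deg τ ≤ 1`, the operator `σ D² + τ D` does not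
raise degrees and multiplies the leading coefficient of a degree-`M` polynomial by
`M(M-1)σ₂ + Mτ₁ = -λ_M`, so `deg q < M`. Writing `p = (X - a_k) r`, one has `p'(a_k) = r(a_k)` and
`p''(a_k) = 2r'(a_k) = 2r(a_k) ∑_{j≠k} 1/(a_k - a_j)`, so `q(a_k)` is `r(a_k)` times the `k`-th
stationary equation. Hence `q` has `M` distinct roots and vanishes.
-/

open Polynomial

namespace Polynomial

section Semiring

variable {R : Type*} [Semiring R] {f p : R[X]} {k n : ℕ}

theorem degree_lt_of_natDegree_le_of_coeff_eq_zero (hp : p.natDegree ≤ n) (hn : p.coeff n = 0) :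
    p.degree < n :=
  (degree_lt_iff_coeff_zero p n).2 fun _ hm =>
    hm.eq_or_lt.elim (· ▸ hn) fun h => coeff_eq_zero_of_natDegree_lt (hp.trans_lt h)

theorem natDegree_mul_iterate_derivative_le (hf : f.natDegree ≤ k) (hp : p.natDegree ≤ n) :
    (f * derivative^[k] p).natDegree ≤ n := by
  rcases lt_or_ge n k with hnk | hkn
  · simp [iterate_derivative_eq_zero (hp.trans_lt hnk)]
  · calc (f * derivative^[k] p).natDegree
        ≤ f.natDegree + (derivative^[k] p).natDegree := natDegree_mul_le
      _ ≤ k + (p.natDegree - k) := add_le_add hf (natDegree_iterate_derivative p k)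
      _ ≤ n := by omega

theorem coeff_mul_iterate_derivative (hf : f.natDegree ≤ k) (hp : p.natDegree ≤ n) :
    (f * derivative^[k] p).coeff n = f.coeff k * (n.descFactorial k • p.coeff n) := by
  rcases lt_or_ge n k with hnk | hkn
  · simp [iterate_derivative_eq_zero (hp.trans_lt hnk), Nat.descFactorial_eq_zero_iff_lt.2 hnk]
  · obtain ⟨m, rfl⟩ := Nat.exists_eq_add_of_le hkn
    have hpm : (derivative^[k] p).natDegree ≤ m :=
      (natDegree_iterate_derivative p k).trans (by omega)
    rw [coeff_mul_add_eq_of_natDegree_le hf hpm, coeff_iterate_derivative, add_comm m]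

end Semiring

section CommRing

variable {R : Type*} [CommRing R] {σ τ p : R[X]} {n : ℕ}

theorem natDegree_hypergeometric_le (hσ : σ.natDegree ≤ 2) (hτ : τ.natDegree ≤ 1)
    (hp : p.natDegree ≤ n) :
    (σ * derivative (derivative p) + τ * derivative p).natDegree ≤ n :=
  natDegree_add_le_of_degree_le (natDegree_mul_iterate_derivative_le (k := 2) hσ hp)
    (natDegree_mul_iterate_derivative_le (k := 1) hτ hp)

theorem coeff_hypergeometric (hσ : σ.natDegree ≤ 2) (hτ : τ.natDegree ≤ 1)
    (hp : p.natDegree ≤ n) :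
    (σ * derivative (derivative p) + τ * derivative p).coeff n
      = (n * (n - 1) * σ.coeff 2 + n * τ.coeff 1) * p.coeff n := by
  have h2 := coeff_mul_iterate_derivative (k := 2) hσ hp
  have h1 := coeff_mul_iterate_derivative (k := 1) hτ hp
  simp only [Function.iterate_succ, Function.iterate_zero, Function.comp_apply, nsmul_eq_mul,
    Nat.cast_descFactorial_two, Nat.descFactorial_one, id_eq] at h1 h2
  rw [coeff_add, h1, h2]
  ring

theorem eval_derivative_X_sub_C_mul (c : R) (r : R[X]) :
    (derivative ((X - C c) * r)).eval c = r.eval c := by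
  simp [derivative_mul]

theorem eval_derivative_derivative_X_sub_C_mul (c : R) (r : R[X]) :
    (derivative (derivative ((X - C c) * r))).eval c = 2 * (derivative r).eval c := by
  simp [derivative_mul]
  ring

theorem eval_hypergeometric_X_sub_C_mul {c S : R} {r : R[X]}
    (hr : (derivative r).eval c = r.eval c * S) (hstat : τ.eval c + 2 * σ.eval c * S = 0)
    (lam : R) :
    (σ * derivative (derivative ((X - C c) * r)) + τ * derivative ((X - C c) * r)
      + C lam * ((X - C c) * r)).eval c = 0 := by
  simp only [eval_add, eval_mul, eval_derivative_derivative_X_sub_C_mul,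
    eval_derivative_X_sub_C_mul, hr, eval_sub, eval_X, eval_C, sub_self, zero_mul, mul_zero]
  linear_combination r.eval c * hstat

end CommRing

section Field

variable {K : Type*} [Field K]

theorem eval_derivative_prod_X_sub_C {ι : Type*} (s : Finset ι) (b : ι → K) {c : K}
    (hc : ∀ j ∈ s, c ≠ b j) :
    (derivative (∏ j ∈ s, (X - C (b j)))).eval c
      = (∏ j ∈ s, (X - C (b j))).eval c * ∑ j ∈ s, 1 / (c - b j) := by
  have hsplit : (∏ j ∈ s, (X - C (b j))).Splits := Splits.prod fun j _ => Splits.X_sub_C (b j)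
  have hne : (∏ j ∈ s, (X - C (b j))).eval c ≠ 0 := by
    simpa [eval_prod, Finset.prod_ne_zero_iff, sub_ne_zero] using hc
  have hroots : (∏ j ∈ s, (X - C (b j))).roots = s.val.map b := by
    simpa [Multiset.map_map] using roots_multiset_prod_X_sub_C (s.val.map b)
  rw [hsplit.eval_derivative_eq_eval_mul_sum hne, hroots, Multiset.map_map]
  rfl

end Field

end Polynomial

/-- If pairwise distinct `a_1,…,a_M` satisfy the stationary system
`τ(a_k) + 2σ(a_k) ∑_{j≠k} 1/(a_k − a_j) = 0`, then `p = ∏ (X − a_j)` satisfies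
`σ p'' + τ p' + λ_M p = 0` with `λ_M = −(M(M−1)/2)σ'' − M τ'`. -/
theorem stationary_system_hypergeometric (M : ℕ) (σ τ : Polynomial ℂ)
    (hσ : σ.degree ≤ 2) (hτ : τ.degree ≤ 1)
    (a : Fin M → ℂ) (ha : Function.Injective a)
    (hstat : ∀ k : Fin M,
      τ.eval (a k) + 2 * σ.eval (a k) * ∑ j ∈ Finset.univ.erase k, 1 / (a k - a j) = 0)
    (p : Polynomial ℂ) (hp : p = ∏ j, (X - C (a j)))
    (lamM : ℂ)
    (hlam : lamM = -((M : ℂ) * ((M : ℂ) - 1) / 2) * (derivative (derivative σ)).coeff 0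
        - (M : ℂ) * (derivative τ).coeff 0) :
    σ * derivative (derivative p) + τ * derivative p + C lamM * p = 0 := by
  have hσ2 : σ.natDegree ≤ 2 := natDegree_le_of_degree_le hσ
  have hτ1 : τ.natDegree ≤ 1 := natDegree_le_of_degree_le hτ
  have hpM : p.natDegree ≤ M := by simp [hp, natDegree_finsetProd_X_sub_C_eq_card]
  set q := σ * derivative (derivative p) + τ * derivative p + C lamM * p with hq
  have hqM : q.natDegree ≤ M :=
    natDegree_add_le_of_degree_le (natDegree_hypergeometric_le hσ2 hτ1 hpM)
      ((natDegree_C_mul_le _ _).trans hpM)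
  have hq_coeff : q.coeff M = 0 := by
    rw [hq, coeff_add, coeff_hypergeometric hσ2 hτ1 hpM, coeff_C_mul, hlam]
    simp only [coeff_derivative]
    ring
  have hq_root : ∀ k, q.eval (a k) = 0 := fun k => by
    have hc : ∀ j ∈ Finset.univ.erase k, a k ≠ a j := fun j hj h =>
      Finset.ne_of_mem_erase hj (ha h).symm
    rw [hq, hp, ← Finset.mul_prod_erase _ _ (Finset.mem_univ k)]
    exact eval_hypergeometric_X_sub_C_mul (eval_derivative_prod_X_sub_C _ _ hc) (hstat k) lamM
  exact eq_zero_of_degree_lt_of_eval_index_eq_zero Finset.univ ha.injOn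
    (by simpa using degree_lt_of_natDegree_le_of_coeff_eq_zero hqM hq_coeff) fun k _ => hq_root k
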